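/- arXiv:1910.03231 — 2 statements merged into one kernel-verified Lean document; each statement's English description precedes it below -/
import Mathlib

section
/- Let f* be a classifier with error rates e*₊₁ := P(f*(X) = −1 | Y = +1) and e*₋₁ := P(f*(X) = +1 | Y = −1) satisfying e*₋₁ + e*₊₁ < 1. If e₋₁ + e₊₁ < 1, then Ỹ is categorical with respect to f*(X): for each y ∈ {−1,+1}, P(Ỹ = −y | f*(X) = y) < P(Ỹ = −y). -/
open MeasureTheory

/-!
Write `cov(E, C) = P(E ∩ C) - P(E) P(C)`. If `E` and `F` are conditionally independent given
the binary label, i.e. given each cell of the partition `{Y = 1}, {Y = -1}`, then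
`cov(E, F) · P(Y = 1) P(Y = -1) = cov(E, {Y = 1}) · cov(F, {Y = 1})`. Error rates `a, b` with
`a + b < 1` make `{f(X) = 1}` and `{Ỹ = 1}` positively correlated with `{Y = 1}`, since
`cov = (1 - a - b) P(Y = 1) P(Y = -1)`; hence `{f(X) = y}` and `{Ỹ = -y}` are negatively
correlated.
-/

lemma isCompl_setOf_eq_one_neg_one {Ω : Type*} {Z : Ω → ℤ}
    (hZ : ∀ ω, Z ω = 1 ∨ Z ω = -1) : IsCompl {ω | Z ω = 1} {ω | Z ω = -1} := by
  have hcompl : {ω | Z ω = 1}ᶜ = {ω | Z ω = -1} := by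
    ext ω
    have := hZ ω
    simp only [Set.mem_compl_iff, Set.mem_ofPred_eq]
    omega
  exact hcompl ▸ isCompl_compl

section

variable {Ω : Type*} [MeasurableSpace Ω] {μ : Measure Ω}

def eventCov (μ : Measure Ω) (E C : Set Ω) : ℝ :=
  μ.real (E ∩ C) - μ.real E * μ.real C

lemma measureReal_inter_add_inter_compl [IsFiniteMeasure μ] (E : Set Ω) {C : Set Ω}
    (hC : MeasurableSet C) : μ.real (E ∩ C) + μ.real (E ∩ Cᶜ) = μ.real E :=
  measureReal_inter_add_sdiff hC

variable [IsProbabilityMeasure μ]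

lemma eventCov_eq_neg_of_isCompl {E E' C : Set Ω} (hE : MeasurableSet E) (hEE' : IsCompl E E') :
    eventCov μ E' C = -eventCov μ E C := by
  obtain rfl := hEE'.compl_eq
  have hsplit := measureReal_inter_add_inter_compl (μ := μ) C hE
  rw [Set.inter_comm C, Set.inter_comm C] at hsplit
  simp only [eventCov, probReal_compl_eq_one_sub hE]
  linarith

lemma eventCov_eq_of_rates {C D E E' : Set Ω} (hC : MeasurableSet C) (hCD : IsCompl C D)
    (hE : MeasurableSet E) (hEE' : IsCompl E E') {a b : ℝ}
    (ha : μ.real (E' ∩ C) = a * μ.real C) (hb : μ.real (E ∩ D) = b * μ.real D) :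
    eventCov μ E C = (1 - a - b) * (μ.real C * μ.real D) := by
  obtain rfl := hCD.compl_eq
  obtain rfl := hEE'.compl_eq
  have hsplitC := measureReal_inter_add_inter_compl (μ := μ) C hE
  have hsplitE := measureReal_inter_add_inter_compl (μ := μ) E hC
  rw [Set.inter_comm C, Set.inter_comm C] at hsplitC
  rw [probReal_compl_eq_one_sub hC] at hb
  rw [eventCov, ← hsplitE, probReal_compl_eq_one_sub hC, hb]
  linear_combination (1 - μ.real C) * hsplitC - (1 - μ.real C) * ha

lemma eventCov_mul_eq_of_condIndep {C D E F : Set Ω} (hC : MeasurableSet C) (hCD : IsCompl C D)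
    (h₁ : μ.real C * μ.real (E ∩ (F ∩ C)) = μ.real (E ∩ C) * μ.real (F ∩ C))
    (h₂ : μ.real D * μ.real (E ∩ (F ∩ D)) = μ.real (E ∩ D) * μ.real (F ∩ D)) :
    eventCov μ E F * (μ.real C * μ.real D) = eventCov μ E C * eventCov μ F C := by
  obtain rfl := hCD.compl_eq
  have hE := measureReal_inter_add_inter_compl (μ := μ) E hC
  have hF := measureReal_inter_add_inter_compl (μ := μ) F hC
  have hEF := measureReal_inter_add_inter_compl (μ := μ) (E ∩ F) hC
  simp only [Set.inter_assoc] at hEF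
  simp only [eventCov, probReal_compl_eq_one_sub hC] at *
  rw [← hE, ← hF, ← hEF]
  linear_combination (1 - μ.real C) * h₁ + μ.real C * h₂

lemma measureReal_inter_div_lt_of_condIndep {C D E F : Set Ω} (hC : MeasurableSet C)
    (hCD : IsCompl C D)
    (h₁ : μ.real C * μ.real (E ∩ (F ∩ C)) = μ.real (E ∩ C) * μ.real (F ∩ C))
    (h₂ : μ.real D * μ.real (E ∩ (F ∩ D)) = μ.real (E ∩ D) * μ.real (F ∩ D))
    (hneg : eventCov μ E C * eventCov μ F C < 0) :
    μ.real (F ∩ E) / μ.real E < μ.real F := by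
  have hEF : eventCov μ E F < 0 := by
    refine neg_of_mul_neg_left (b := μ.real C * μ.real D) ?_ (by positivity)
    rwa [eventCov_mul_eq_of_condIndep hC hCD h₁ h₂]
  have hlt : μ.real (E ∩ F) < μ.real E * μ.real F := sub_neg.mp hEF
  have hE : 0 < μ.real E :=
    pos_of_mul_pos_left (measureReal_nonneg.trans_lt hlt) measureReal_nonneg
  rwa [div_lt_iff₀ hE, Set.inter_comm, mul_comm]

end

/-- If `em + ep < 1` and `efm + efp < 1`, the noisy label `Ỹ` is categorical
with respect to `f(X)`: for each `y ∈ {-1,1}`, `P(Ỹ = -y | f(X) = y) < P(Ỹ = -y)`. -/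
theorem peer_loss_stmt2
    {Ω 𝒳 : Type*} [MeasurableSpace Ω] [MeasurableSpace 𝒳]
    (μ : Measure Ω) [IsProbabilityMeasure μ]
    (X : Ω → 𝒳) (Y Ytil : Ω → ℤ)
    (hmX : Measurable X) (hmY : Measurable Y) (hmYt : Measurable Ytil)
    (hYval : ∀ ω, Y ω = 1 ∨ Y ω = -1)
    (hYtval : ∀ ω, Ytil ω = 1 ∨ Ytil ω = -1)
    (p ep em : ℝ)
    (hp : (μ {ω | Y ω = 1}).toReal = p) (hp0 : 0 < p) (hp1 : p < 1)
    (hep : (μ {ω | Ytil ω = -1 ∧ Y ω = 1}).toReal = ep * (μ {ω | Y ω = 1}).toReal)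
    (hem : (μ {ω | Ytil ω = 1 ∧ Y ω = -1}).toReal = em * (μ {ω | Y ω = -1}).toReal)
    -- `Ỹ` is conditionally independent of `X` given `Y`
    (hCI : ∀ (A : Set 𝒳) (y y' : ℤ),
      (μ {ω | Y ω = y}).toReal * (μ {ω | X ω ∈ A ∧ Ytil ω = y' ∧ Y ω = y}).toReal
        = (μ {ω | X ω ∈ A ∧ Y ω = y}).toReal * (μ {ω | Ytil ω = y' ∧ Y ω = y}).toReal)
    (f : 𝒳 → ℤ) (hmf : Measurable f)
    (hfval : ∀ x, f x = 1 ∨ f x = -1)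
    (efp efm : ℝ)
    (hefp : (μ {ω | f (X ω) = -1 ∧ Y ω = 1}).toReal = efp * (μ {ω | Y ω = 1}).toReal)
    (hefm : (μ {ω | f (X ω) = 1 ∧ Y ω = -1}).toReal = efm * (μ {ω | Y ω = -1}).toReal)
    (hef : efm + efp < 1)
    (he : em + ep < 1) :
    ∀ y : ℤ, (y = 1 ∨ y = -1) →
      (μ {ω | Ytil ω = -y ∧ f (X ω) = y}).toReal / (μ {ω | f (X ω) = y}).toReal
        < (μ {ω | Ytil ω = -y}).toReal := by
  have hC := isCompl_setOf_eq_one_neg_one hYval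
  have hE := isCompl_setOf_eq_one_neg_one fun ω ↦ hfval (X ω)
  have hF := isCompl_setOf_eq_one_neg_one hYtval
  have hCm : MeasurableSet {ω | Y ω = 1} := hmY (measurableSet_singleton 1)
  have hEm : MeasurableSet {ω | f (X ω) = 1} := (hmf.comp hmX) (measurableSet_singleton 1)
  have hFm : MeasurableSet {ω | Ytil ω = 1} := hmYt (measurableSet_singleton 1)
  have hv : 0 < μ.real {ω | Y ω = 1} * μ.real {ω | Y ω = -1} := by
    rw [← hC.compl_eq, probReal_compl_eq_one_sub hCm, measureReal_def, hp]
    exact mul_pos hp0 (sub_pos.2 hp1)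
  have hrates : 0 < (1 - efp - efm) * (1 - ep - em) := mul_pos (by linarith) (by linarith)
  have hcovE := eventCov_eq_of_rates hCm hC hEm hE hefp hefm
  have hcovF := eventCov_eq_of_rates hCm hC hFm hF hep hem
  rintro y (rfl | rfl)
  · refine measureReal_inter_div_lt_of_condIndep
      (E := {ω | f (X ω) = 1}) (F := {ω | Ytil ω = -1}) hCm hC
      (hCI (f ⁻¹' {1}) 1 (-1)) (hCI (f ⁻¹' {1}) (-1) (-1)) ?_
    rw [hcovE, eventCov_eq_neg_of_isCompl hFm hF, hcovF]
    nlinarith [mul_pos hrates (mul_pos hv hv)]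
  · simp only [neg_neg]
    refine measureReal_inter_div_lt_of_condIndep
      (E := {ω | f (X ω) = -1}) (F := {ω | Ytil ω = 1}) hCm hC
      (hCI (f ⁻¹' {-1}) 1 1) (hCI (f ⁻¹' {-1}) (-1) 1) ?_
    rw [eventCov_eq_neg_of_isCompl hEm hE, hcovE, hcovF]
    nlinarith [mul_pos hrates (mul_pos hv hv)]
end

section
/- Suppose e₋₁ + e₊₁ < 1, and let f̃* ∈ argmin_{f∈ℱ} E_{D̃}[𝟙_peer(f(X), Ỹ)] be a minimizer of the expected 0-1 peer risk over the noisy distribution within a hypothesis class ℱ. Then |R_D(f̃*) − min_{f∈ℱ} R_D(f)| ≤ |δ_p|, where δ_p := P(Y = +1) − P(Y = −1) = 2p − 1. -/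
/-!
For `±1`-valued `U` and `L`, the peer risk `P(U ≠ L) - P(U(ω₁) ≠ L(ω₂))` equals
`-2 Cov(𝟙(U = 1), 𝟙(L = 1))`. Class-conditional noise independent of `X` makes both
`P(U = 1, Ỹ = 1)` and `P(Ỹ = 1)` affine in `P(U = 1, Y = 1)`, resp. `P(Y = 1)`, with the same slope
`1 - e₋₁ - e₊₁` and intercepts `e₋₁ P(U = 1)`, resp. `e₋₁`; so the noisy peer risk is
`(1 - e₋₁ - e₊₁)` times the clean one, and the noisy peer minimizer minimizes the clean peer risk.
Finally `R_D(U) = peer risk + p + (1 - 2p) P(U = 1)`, so two classifiers whose clean peer risks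
are ordered have 0-1 risks ordered up to `|1 - 2p| = |δ_p|`.
-/

open MeasureTheory

/-- The expected 0-1 peer loss; the peer samples `ω₁, ω₂` are independent draws, hence `μ.prod μ`. -/
noncomputable def peerRisk {Ω : Type*} [MeasurableSpace Ω] (μ : Measure Ω) (U L : Ω → ℤ) : ℝ :=
  μ.real {ω | U ω ≠ L ω} - (μ.prod μ).real {w | U w.1 ≠ L w.2}

section

variable {α Ω Ω' : Type*} [MeasurableSpace Ω] [MeasurableSpace Ω']

lemma setOf_eq_neg_one_eq_compl {Z : α → ℤ} (hZ : ∀ a, Z a = 1 ∨ Z a = -1) :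
    {a | Z a = -1} = {a | Z a = 1}ᶜ := by
  ext a
  simp only [Set.mem_ofPred_eq, Set.mem_compl_iff]
  rcases hZ a with h | h <;> simp [h]

section Finite

variable {μ : Measure Ω} [IsFiniteMeasure μ]

lemma measureReal_inter_add_inter_compl_s7 (s : Set Ω) {t : Set Ω} (ht : MeasurableSet t) :
    μ.real (s ∩ t) + μ.real (s ∩ tᶜ) = μ.real s := by
  rw [← Set.sdiff_eq]
  exact measureReal_inter_add_sdiff ht

lemma measureReal_setOf_ne {U L : Ω → ℤ} (hU : Measurable U) (hL : Measurable L)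
    (hUv : ∀ ω, U ω = 1 ∨ U ω = -1) (hLv : ∀ ω, L ω = 1 ∨ L ω = -1) :
    μ.real {ω | U ω ≠ L ω} = μ.real {ω | U ω = 1} + μ.real {ω | L ω = 1}
      - 2 * μ.real ({ω | U ω = 1} ∩ {ω | L ω = 1}) := by
  have hG : MeasurableSet {ω | U ω = 1} := hU (measurableSet_singleton 1)
  have hP : MeasurableSet {ω | L ω = 1} := hL (measurableSet_singleton 1)
  have hne : {ω | U ω ≠ L ω} = symmDiff {ω | U ω = 1} {ω | L ω = 1} := by
    ext ω
    simp only [Set.mem_ofPred_eq, Set.mem_symmDiff]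
    rcases hUv ω with h | h <;> rcases hLv ω with h' | h' <;> simp [h, h']
  have hUL := measureReal_inter_add_sdiff (μ := μ) (s := {ω | U ω = 1}) hP
  have hLU := measureReal_inter_add_sdiff (μ := μ) (s := {ω | L ω = 1}) hG
  rw [Set.inter_comm] at hLU
  rw [hne, measureReal_symmDiff_eq hG hP]
  linarith

/-- `hCI` is conditional independence `P(A, T | S) = P(A | S) P(T | S)` cleared of denominators;
when `P(S) = 0` both sides of the conclusion vanish. -/
lemma measureReal_inter_inter_eq_mul {A T S : Set Ω} {r : ℝ}
    (hCI : μ.real S * μ.real (A ∩ (T ∩ S)) = μ.real (A ∩ S) * μ.real (T ∩ S))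
    (hr : μ.real (T ∩ S) = r * μ.real S) :
    μ.real (A ∩ (T ∩ S)) = r * μ.real (A ∩ S) := by
  rcases eq_or_ne (μ.real S) 0 with hS | hS
  · rw [measureReal_mono_null (by intro ω; simp +contextual) hS,
      measureReal_mono_null Set.inter_subset_right hS, mul_zero]
  · apply mul_left_cancel₀ hS
    rw [hCI, hr]
    ring

lemma measureReal_inter_eq_of_noise_rates {A T P : Set Ω} (hP : MeasurableSet P) {ep em : ℝ}
    (hpos : μ.real (A ∩ (T ∩ P)) = (1 - ep) * μ.real (A ∩ P))
    (hneg : μ.real (A ∩ (T ∩ Pᶜ)) = em * μ.real (A ∩ Pᶜ)) :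
    μ.real (A ∩ T) = (1 - em - ep) * μ.real (A ∩ P) + em * μ.real A := by
  have hAT := measureReal_inter_add_inter_compl_s7 (μ := μ) (A ∩ T) hP
  have hA := measureReal_inter_add_inter_compl_s7 (μ := μ) A hP
  rw [Set.inter_assoc, Set.inter_assoc, hpos, hneg] at hAT
  linear_combination -hAT + em * hA

end Finite

section Probability

variable {μ : Measure Ω} [IsProbabilityMeasure μ] {ν : Measure Ω'} [IsProbabilityMeasure ν]

lemma measureReal_prod_setOf_ne {U : Ω → ℤ} {L : Ω' → ℤ} (hU : Measurable U) (hL : Measurable L)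
    (hUv : ∀ ω, U ω = 1 ∨ U ω = -1) (hLv : ∀ ω, L ω = 1 ∨ L ω = -1) :
    (μ.prod ν).real {w | U w.1 ≠ L w.2} = μ.real {ω | U ω = 1} + ν.real {ω | L ω = 1}
      - 2 * μ.real {ω | U ω = 1} * ν.real {ω | L ω = 1} := by
  have hG : MeasurableSet {ω | U ω = 1} := hU (measurableSet_singleton 1)
  have hP : MeasurableSet {ω | L ω = 1} := hL (measurableSet_singleton 1)
  have hne : {w : Ω × Ω' | U w.1 ≠ L w.2} = {ω | U ω = 1} ×ˢ {ω | L ω = 1}ᶜ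
      ∪ {ω | U ω = 1}ᶜ ×ˢ {ω | L ω = 1} := by
    rw [← setOf_eq_neg_one_eq_compl hUv, ← setOf_eq_neg_one_eq_compl hLv]
    ext w
    simp only [Set.mem_ofPred_eq, Set.mem_union, Set.mem_prod]
    rcases hUv w.1 with h | h <;> rcases hLv w.2 with h' | h' <;> simp [h, h']
  have hdisj : Disjoint ({ω | U ω = 1} ×ˢ {ω | L ω = 1}ᶜ) ({ω | U ω = 1}ᶜ ×ˢ {ω | L ω = 1}) :=
    Set.disjoint_prod.2 (Or.inl disjoint_compl_right)
  rw [hne, measureReal_union hdisj (hG.compl.prod hP), measureReal_prod_prod, measureReal_prod_prod,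
    probReal_compl_eq_one_sub hG, probReal_compl_eq_one_sub hP]
  ring

lemma peerRisk_eq {U L : Ω → ℤ} (hU : Measurable U) (hL : Measurable L)
    (hUv : ∀ ω, U ω = 1 ∨ U ω = -1) (hLv : ∀ ω, L ω = 1 ∨ L ω = -1) :
    peerRisk μ U L = -2 * (μ.real ({ω | U ω = 1} ∩ {ω | L ω = 1})
      - μ.real {ω | U ω = 1} * μ.real {ω | L ω = 1}) := by
  rw [peerRisk, measureReal_setOf_ne hU hL hUv hLv, measureReal_prod_setOf_ne hU hL hUv hLv]
  ring

lemma peerRisk_noisy {U Y Ytil : Ω → ℤ} (hU : Measurable U) (hY : Measurable Y)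
    (hYt : Measurable Ytil) (hUv : ∀ ω, U ω = 1 ∨ U ω = -1) (hYv : ∀ ω, Y ω = 1 ∨ Y ω = -1)
    (hYtv : ∀ ω, Ytil ω = 1 ∨ Ytil ω = -1) {ep em : ℝ}
    (hep : μ.real {ω | Ytil ω = -1 ∧ Y ω = 1} = ep * μ.real {ω | Y ω = 1})
    (hem : μ.real {ω | Ytil ω = 1 ∧ Y ω = -1} = em * μ.real {ω | Y ω = -1})
    (hCI : ∀ y, μ.real {ω | Y ω = y} * μ.real {ω | U ω = 1 ∧ Ytil ω = 1 ∧ Y ω = y}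
      = μ.real {ω | U ω = 1 ∧ Y ω = y} * μ.real {ω | Ytil ω = 1 ∧ Y ω = y}) :
    peerRisk μ U Ytil = (1 - em - ep) * peerRisk μ U Y := by
  have hP : MeasurableSet {ω | Y ω = 1} := hY (measurableSet_singleton 1)
  have hCIpos := hCI 1
  have hCIneg := hCI (-1)
  simp only [Set.ofPred_and, setOf_eq_neg_one_eq_compl hYv, setOf_eq_neg_one_eq_compl hYtv]
    at hep hem hCIpos hCIneg
  have hTP : μ.real ({ω | Ytil ω = 1} ∩ {ω | Y ω = 1}) = (1 - ep) * μ.real {ω | Y ω = 1} := by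
    have hT : MeasurableSet {ω | Ytil ω = 1} := hYt (measurableSet_singleton 1)
    have hsplit := measureReal_inter_add_inter_compl_s7 (μ := μ) {ω | Y ω = 1} hT
    rw [Set.inter_comm, Set.inter_comm {ω | Y ω = 1}] at hsplit
    linarith
  have hUT := measureReal_inter_eq_of_noise_rates hP (measureReal_inter_inter_eq_mul hCIpos hTP)
    (measureReal_inter_inter_eq_mul hCIneg hem)
  have hT := measureReal_inter_eq_of_noise_rates (A := Set.univ) hP (by simpa using hTP)
    (by simpa using hem)
  simp only [Set.univ_inter, probReal_univ, mul_one] at hT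
  rw [peerRisk_eq hU hYt hUv hYtv, peerRisk_eq hU hY hUv hYv, hUT, hT]
  ring

lemma measureReal_setOf_ne_le_of_peerRisk_le {U V Y : Ω → ℤ} (hU : Measurable U)
    (hV : Measurable V) (hY : Measurable Y) (hUv : ∀ ω, U ω = 1 ∨ U ω = -1)
    (hVv : ∀ ω, V ω = 1 ∨ V ω = -1) (hYv : ∀ ω, Y ω = 1 ∨ Y ω = -1)
    (h : peerRisk μ U Y ≤ peerRisk μ V Y) :
    μ.real {ω | U ω ≠ Y ω}
      ≤ μ.real {ω | V ω ≠ Y ω} + |μ.real {ω | Y ω = 1} - μ.real {ω | Y ω = -1}| := by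
  rw [peerRisk_eq hU hY hUv hYv, peerRisk_eq hV hY hVv hYv] at h
  have hP : MeasurableSet {ω | Y ω = 1} := hY (measurableSet_singleton 1)
  rw [measureReal_setOf_ne hU hY hUv hYv, measureReal_setOf_ne hV hY hVv hYv,
    setOf_eq_neg_one_eq_compl hYv, probReal_compl_eq_one_sub hP]
  set p := μ.real {ω | Y ω = 1}
  set qU := μ.real {ω | U ω = 1}
  set qV := μ.real {ω | V ω = 1}
  have hq : |qU - qV| ≤ 1 :=
    abs_sub_le_of_nonneg_of_le measureReal_nonneg measureReal_le_one measureReal_nonneg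
      measureReal_le_one
  have hshift : (qU - qV) * (1 - 2 * p) ≤ |p - (1 - p)| :=
    calc (qU - qV) * (1 - 2 * p) ≤ |qU - qV| * |p - (1 - p)| := by
          rw [← abs_mul, ← abs_neg]
          exact le_of_eq_of_le (by ring) (le_abs_self _)
      _ ≤ |p - (1 - p)| := mul_le_of_le_one_left (abs_nonneg _) hq
  linarith

end Probability

end

lemma abs_sub_csInf_image_le {α : Type*} {s : Set α} {R : α → ℝ} {a : α} {c : ℝ}
    (hbdd : BddBelow (R '' s)) (ha : a ∈ s) (h : ∀ x ∈ s, R a ≤ R x + c) :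
    |R a - sInf (R '' s)| ≤ c := by
  have hle : sInf (R '' s) ≤ R a := csInf_le hbdd (Set.mem_image_of_mem R ha)
  have hge : R a - c ≤ sInf (R '' s) :=
    le_csInf (Set.image_nonempty.2 ⟨a, ha⟩)
      (Set.forall_mem_image.2 fun x hx => by linarith [h x hx])
  rw [abs_le]
  constructor <;> linarith

theorem peer_loss_stmt7_general
    {Ω 𝒳 : Type*} [MeasurableSpace Ω] [MeasurableSpace 𝒳]
    (μ : Measure Ω) [IsProbabilityMeasure μ]
    (X : Ω → 𝒳) (Y Ytil : Ω → ℤ)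
    (hmX : Measurable X) (hmY : Measurable Y) (hmYt : Measurable Ytil)
    (hYval : ∀ ω, Y ω = 1 ∨ Y ω = -1)
    (hYtval : ∀ ω, Ytil ω = 1 ∨ Ytil ω = -1)
    (ep em : ℝ)
    (hep : (μ {ω | Ytil ω = -1 ∧ Y ω = 1}).toReal = ep * (μ {ω | Y ω = 1}).toReal)
    (hem : (μ {ω | Ytil ω = 1 ∧ Y ω = -1}).toReal = em * (μ {ω | Y ω = -1}).toReal)
    -- `Ỹ` is conditionally independent of `X` given `Y`
    (hCI : ∀ (A : Set 𝒳) (y y' : ℤ),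
      (μ {ω | Y ω = y}).toReal * (μ {ω | X ω ∈ A ∧ Ytil ω = y' ∧ Y ω = y}).toReal
        = (μ {ω | X ω ∈ A ∧ Y ω = y}).toReal * (μ {ω | Ytil ω = y' ∧ Y ω = y}).toReal)
    (he : em + ep < 1)
    (ℱ : Set (𝒳 → ℤ)) (hℱ : ∀ g ∈ ℱ, Measurable g ∧ ∀ x, g x = 1 ∨ g x = -1)
    (ftil : 𝒳 → ℤ) (hmem : ftil ∈ ℱ)
    (hmin : ∀ g ∈ ℱ,
      (μ {ω | ftil (X ω) ≠ Ytil ω}).toReal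
          - ((μ.prod μ) {w | ftil (X w.1) ≠ Ytil w.2}).toReal
        ≤ (μ {ω | g (X ω) ≠ Ytil ω}).toReal
          - ((μ.prod μ) {w | g (X w.1) ≠ Ytil w.2}).toReal) :
    |(μ {ω | ftil (X ω) ≠ Y ω}).toReal
        - sInf ((fun g : 𝒳 → ℤ => (μ {ω | g (X ω) ≠ Y ω}).toReal) '' ℱ)|
      ≤ |(μ {ω | Y ω = 1}).toReal - (μ {ω | Y ω = -1}).toReal| := by
  have hnoisy : ∀ g ∈ ℱ, peerRisk μ (g ∘ X) Ytil = (1 - em - ep) * peerRisk μ (g ∘ X) Y :=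
    fun g hg => peerRisk_noisy ((hℱ g hg).1.comp hmX) hmY hmYt (fun ω => (hℱ g hg).2 (X ω))
      hYval hYtval hep hem (fun y => hCI {x | g x = 1} y 1)
  refine abs_sub_csInf_image_le (R := fun g => μ.real {ω | g (X ω) ≠ Y ω})
    ⟨0, Set.forall_mem_image.2 fun _ _ => measureReal_nonneg⟩ hmem fun g hg => ?_
  refine measureReal_setOf_ne_le_of_peerRisk_le (U := ftil ∘ X) (V := g ∘ X)
    ((hℱ ftil hmem).1.comp hmX) ((hℱ g hg).1.comp hmX) hmY (fun ω => (hℱ ftil hmem).2 (X ω))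
    (fun ω => (hℱ g hg).2 (X ω)) hYval ?_
  have hnoisy_le : peerRisk μ (ftil ∘ X) Ytil ≤ peerRisk μ (g ∘ X) Ytil := hmin g hg
  rw [hnoisy ftil hmem, hnoisy g hg] at hnoisy_le
  exact le_of_mul_le_mul_left hnoisy_le (by linarith)

/-- **Theorem 3: approximate optimality with unequal prior.**
If `em + ep < 1` and `ftil` minimizes the expected 0-1 peer risk over the noisy distribution
within the hypothesis class `ℱ`, then `|R_D(ftil) - min_(f ∈ ℱ) R_D(f)| ≤ |δ_p|` where
`δ_p = P(Y = 1) - P(Y = -1)`. -/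
theorem peer_loss_stmt7
    {Ω 𝒳 : Type*} [MeasurableSpace Ω] [MeasurableSpace 𝒳]
    (μ : Measure Ω) [IsProbabilityMeasure μ]
    (X : Ω → 𝒳) (Y Ytil : Ω → ℤ)
    (hmX : Measurable X) (hmY : Measurable Y) (hmYt : Measurable Ytil)
    (hYval : ∀ ω, Y ω = 1 ∨ Y ω = -1)
    (hYtval : ∀ ω, Ytil ω = 1 ∨ Ytil ω = -1)
    (ep em : ℝ)
    (p : ℝ) (hp : (μ {ω | Y ω = 1}).toReal = p) (hp0 : 0 < p) (hp1 : p < 1)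
    (hep : (μ {ω | Ytil ω = -1 ∧ Y ω = 1}).toReal = ep * (μ {ω | Y ω = 1}).toReal)
    (hem : (μ {ω | Ytil ω = 1 ∧ Y ω = -1}).toReal = em * (μ {ω | Y ω = -1}).toReal)
    -- `Ỹ` is conditionally independent of `X` given `Y`
    (hCI : ∀ (A : Set 𝒳) (y y' : ℤ),
      (μ {ω | Y ω = y}).toReal * (μ {ω | X ω ∈ A ∧ Ytil ω = y' ∧ Y ω = y}).toReal
        = (μ {ω | X ω ∈ A ∧ Y ω = y}).toReal * (μ {ω | Ytil ω = y' ∧ Y ω = y}).toReal)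
    (he : em + ep < 1)
    (ℱ : Set (𝒳 → ℤ)) (hℱ : ∀ g ∈ ℱ, Measurable g ∧ ∀ x, g x = 1 ∨ g x = -1)
    (ftil : 𝒳 → ℤ) (hmem : ftil ∈ ℱ)
    (hmin : ∀ g ∈ ℱ,
      (μ {ω | ftil (X ω) ≠ Ytil ω}).toReal
          - ((μ.prod μ) {w | ftil (X w.1) ≠ Ytil w.2}).toReal
        ≤ (μ {ω | g (X ω) ≠ Ytil ω}).toReal
          - ((μ.prod μ) {w | g (X w.1) ≠ Ytil w.2}).toReal) :
    |(μ {ω | ftil (X ω) ≠ Y ω}).toReal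
        - sInf ((fun g : 𝒳 → ℤ => (μ {ω | g (X ω) ≠ Y ω}).toReal) '' ℱ)|
      ≤ |(μ {ω | Y ω = 1}).toReal - (μ {ω | Y ω = -1}).toReal| :=
  peer_loss_stmt7_general μ X Y Ytil hmX hmY hmYt hYval hYtval ep em hep hem hCI he ℱ hℱ ftil hmem
    hmin
end
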